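/- Let q(z) = (1+Az)/(1+Bz) with -1 ≤ B < A ≤ 1 and 0 < |B| < 1, and let ζ ∈ ℂ. The inequality Re(1 + z q''(z)/q'(z)) > max{0, -Re ζ} holds for all z in the open unit disk if and only if Re ζ ≥ (|B| - 1)/(|B| + 1). -/

import Mathlib

/-!
With `w = B z`, one has `1 + z q''/q' = (1 - w)/(1 + w)`, whose real part is
`(1 - |w|²)/|1 + w|² ≥ (1 - |w|)/(1 + |w|) > (1 - |B|)/(1 + |B|)` on the disk, while along the real
points `z = s/B`, `0 ≤ s < |B|`, it takes every value of `((1 - |B|)/(1 + |B|), 1]`. So the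
infimum `L = (1 - |B|)/(1 + |B|)` is positive and not attained, and the condition holds iff
`max 0 (-Re ζ) ≤ L`.
-/

open Complex Metric

theorem hasDerivAt_one_add_mul (b z : ℂ) : HasDerivAt (fun w => 1 + b * w) b z := by
  simpa using ((hasDerivAt_id z).const_mul b).const_add 1

section Mobius

variable {a b z : ℂ}

theorem hasDerivAt_mobius (hz : 1 + b * z ≠ 0) :
    HasDerivAt (fun w => (1 + a * w) / (1 + b * w)) ((a - b) / (1 + b * z) ^ 2) z :=
  ((hasDerivAt_one_add_mul a z).fun_div (hasDerivAt_one_add_mul b z) hz).congr_deriv (by ring)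

theorem deriv_deriv_mobius (hz : 1 + b * z ≠ 0) :
    deriv (deriv fun w => (1 + a * w) / (1 + b * w)) z
      = -2 * b * (a - b) / (1 + b * z) ^ 3 := by
  have hnhds : ∀ᶠ w in nhds z, 1 + b * w ≠ 0 :=
    (continuous_const.add (continuous_const.mul continuous_id)).continuousAt.eventually_ne hz
  have hderiv : deriv (fun w => (1 + a * w) / (1 + b * w)) =ᶠ[nhds z]
      fun w => (a - b) / (1 + b * w) ^ 2 :=
    hnhds.mono fun w hw => (hasDerivAt_mobius hw).deriv
  rw [hderiv.deriv_eq]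
  have hpow := (hasDerivAt_one_add_mul b z).fun_pow 2
  rw [((hasDerivAt_const z (a - b)).fun_div hpow (pow_ne_zero 2 hz)).deriv]
  field_simp
  ring

theorem one_add_mul_deriv_deriv_div_deriv_mobius (hab : a ≠ b) (hz : 1 + b * z ≠ 0) :
    1 + z * deriv (deriv fun w => (1 + a * w) / (1 + b * w)) z
        / deriv (fun w => (1 + a * w) / (1 + b * w)) z
      = (1 - b * z) / (1 + b * z) := by
  rw [deriv_deriv_mobius hz, (hasDerivAt_mobius hz).deriv]
  have : a - b ≠ 0 := sub_ne_zero.mpr hab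
  have : 1 + z * b ≠ 0 := by rwa [mul_comm]
  field_simp
  ring

end Mobius

theorem one_add_mul_ne_zero_of_norm_lt_one {b z : ℂ} (hb : ‖b‖ ≤ 1) (hz : ‖z‖ < 1) :
    1 + b * z ≠ 0 := by
  intro h
  have : ‖b * z‖ < 1 := by
    rw [norm_mul]; exact lt_of_le_of_lt (mul_le_of_le_one_left (norm_nonneg z) hb) hz
  rw [eq_neg_of_add_eq_zero_right h, norm_neg, norm_one] at this
  exact lt_irrefl _ this

theorem re_one_sub_div_one_add (w : ℂ) :
    ((1 - w) / (1 + w)).re = (1 - ‖w‖ ^ 2) / normSq (1 + w) := by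
  rw [div_re, ← add_div, Complex.sq_norm]
  congr 1
  simp only [sub_re, one_re, add_re, sub_im, one_im, add_im, normSq_apply]
  ring

theorem div_one_add_norm_le_re_one_sub_div_one_add {w : ℂ} (hw : ‖w‖ < 1) :
    (1 - ‖w‖) / (1 + ‖w‖) ≤ ((1 - w) / (1 + w)).re := by
  have hpos : 0 < normSq (1 + w) := by
    refine normSq_pos.mpr fun h => ?_
    rw [eq_neg_of_add_eq_zero_right h] at hw
    simp at hw
  have hle : normSq (1 + w) ≤ (1 + ‖w‖) ^ 2 := by
    rw [← Complex.sq_norm]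
    gcongr
    simpa using norm_add_le 1 w
  rw [re_one_sub_div_one_add, le_div_iff₀ hpos]
  calc (1 - ‖w‖) / (1 + ‖w‖) * normSq (1 + w)
      ≤ (1 - ‖w‖) / (1 + ‖w‖) * (1 + ‖w‖) ^ 2 := by
        gcongr
    _ = 1 - ‖w‖ ^ 2 := by field_simp; ring

theorem one_sub_div_one_add_lt_one_sub_div_one_add {s t : ℝ} (hs : 0 ≤ s) (hst : s < t) :
    (1 - t) / (1 + t) < (1 - s) / (1 + s) := by
  rw [div_lt_div_iff₀ (by linarith) (by linarith)]
  nlinarith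

theorem forall_mem_ball_lt_re_one_sub_div_one_add_iff {b : ℝ} (hb0 : b ≠ 0) (hb : |b| < 1)
    (c : ℝ) :
    (∀ z ∈ ball (0 : ℂ) 1, c < ((1 - b * z) / (1 + b * z)).re) ↔
      c ≤ (1 - |b|) / (1 + |b|) := by
  have hb0' : 0 < |b| := abs_pos.mpr hb0
  constructor
  · intro H
    by_contra! hc
    have hc0 : 0 < c := lt_trans (div_pos (by linarith) (by linarith)) hc
    rcases le_or_gt 1 c with h1c | h1c
    · have := H 0 (mem_ball_self one_pos)
      norm_num at this
      linarith
    -- the real point `z = s / b` with `(1 - s) / (1 + s) = c`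
    set s := (1 - c) / (1 + c) with hs
    have hs0 : 0 < s := div_pos (by linarith) (by linarith)
    have hsb : s < |b| := by
      rw [div_lt_iff₀ (by linarith)]
      rw [div_lt_iff₀ (by linarith)] at hc
      linarith
    have hz : ((s / b : ℝ) : ℂ) ∈ ball (0 : ℂ) 1 := by
      rw [mem_ball_zero_iff, norm_real, Real.norm_eq_abs, abs_div, abs_of_pos hs0,
        div_lt_one hb0']
      exact hsb
    have hbz : (b : ℂ) * ((s / b : ℝ) : ℂ) = s := by
      have : (b : ℂ) ≠ 0 := ofReal_ne_zero.mpr hb0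
      push_cast
      field_simp
    have hre : ((1 - (s : ℂ)) / (1 + s)).re = c := by
      rw [show (1 - (s : ℂ)) / (1 + s) = ((1 - s) / (1 + s) : ℝ) by push_cast; rfl, ofReal_re, hs]
      field_simp
      ring
    have := H _ hz
    rw [hbz, hre] at this
    exact lt_irrefl c this
  · intro hc z hz
    have hw : ‖(b : ℂ) * z‖ < |b| := by
      rw [norm_mul, norm_real, Real.norm_eq_abs]
      exact mul_lt_of_lt_one_right hb0' (mem_ball_zero_iff.mp hz)
    calc c ≤ (1 - |b|) / (1 + |b|) := hc
      _ < (1 - ‖(b : ℂ) * z‖) / (1 + ‖(b : ℂ) * z‖) :=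
        one_sub_div_one_add_lt_one_sub_div_one_add (norm_nonneg _) hw
      _ ≤ _ := div_one_add_norm_le_re_one_sub_div_one_add (hw.trans hb)

theorem stmt_8_general (A B : ℝ) (hAB : B < A)
    (hB0 : B ≠ 0) (hBlt : |B| < 1) (ζ : ℂ)
    (q : ℂ → ℂ) (hq : ∀ z, q z = (1 + (A : ℂ) * z) / (1 + (B : ℂ) * z)) :
    (∀ z ∈ ball (0 : ℂ) 1,
        (1 + z * deriv (deriv q) z / deriv q z).re > max 0 (-ζ.re)) ↔
      ζ.re ≥ (|B| - 1) / (|B| + 1) := by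
  obtain rfl : q = fun z => (1 + (A : ℂ) * z) / (1 + (B : ℂ) * z) := funext hq
  have hB : ‖(B : ℂ)‖ ≤ 1 := by rw [norm_real, Real.norm_eq_abs]; exact hBlt.le
  have hL : 0 ≤ (1 - |B|) / (1 + |B|) := div_nonneg (by linarith) (by positivity)
  calc (∀ z ∈ ball (0 : ℂ) 1, (1 + z * deriv (deriv _) z / deriv _ z).re > max 0 (-ζ.re))
      ↔ ∀ z ∈ ball (0 : ℂ) 1, max 0 (-ζ.re) < ((1 - B * z) / (1 + B * z)).re := by
        refine forall₂_congr fun z hz => ?_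
        rw [one_add_mul_deriv_deriv_div_deriv_mobius (by exact_mod_cast hAB.ne')
          (one_add_mul_ne_zero_of_norm_lt_one hB (mem_ball_zero_iff.mp hz))]
    _ ↔ max 0 (-ζ.re) ≤ (1 - |B|) / (1 + |B|) :=
        forall_mem_ball_lt_re_one_sub_div_one_add_iff hB0 hBlt _
    _ ↔ ζ.re ≥ (|B| - 1) / (|B| + 1) := by
        rw [max_le_iff, and_iff_right hL, neg_le, ge_iff_le, show -((1 - |B|) / (1 + |B|)) = (|B| - 1) / (|B| + 1) by ring]

theorem stmt_8 (A B : ℝ) (hB : -1 ≤ B) (hAB : B < A) (hA : A ≤ 1)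
    (hB0 : B ≠ 0) (hBlt : |B| < 1) (ζ : ℂ)
    (q : ℂ → ℂ) (hq : ∀ z, q z = (1 + (A : ℂ) * z) / (1 + (B : ℂ) * z)) :
    (∀ z ∈ ball (0 : ℂ) 1,
        (1 + z * deriv (deriv q) z / deriv q z).re > max 0 (-ζ.re)) ↔
      ζ.re ≥ (|B| - 1) / (|B| + 1) :=
  stmt_8_general A B hAB hB0 hBlt ζ q hq
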